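/- arXiv:2112.10463 — 3 statements merged into one kernel-verified Lean document; each statement's English description precedes it below -/
import Mathlib

section
/- Let f : ℤ → ℤ be a bijection that is a (C,D)-quasi-isometry (i.e. for all x,y, (1/C)|x-y| - D ≤ |f(x)-f(y)| ≤ C|x-y| + D) with f(0) = 0, f(n) → ∞ as n → ∞, and f(n) → -∞ as n → -∞. Then f is at bounded distance from the identity: there exists M such that |f(z) - z| ≤ M for all z ∈ ℤ. -/
open Filter Finset

/-- If every preimage of the window `[t-L, t+L]` lies strictly below `x`, and `f`
has steps bounded by `L` and tends to `+∞`, then `f x > t + L`. -/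
lemma cross_lemma (f g : ℤ → ℤ) (L : ℤ) (hL : 0 ≤ L)
    (hgf : ∀ y, g (f y) = y)
    (hstep : ∀ x, |f (x+1) - f x| ≤ L)
    (htop : Filter.Tendsto f Filter.atTop Filter.atTop)
    (t x : ℤ) (hwin : ∀ v, t - L ≤ v → v ≤ t + L → g v < x) :
    t + L < f x := by
  by_contra hcon
  push_neg at hcon
  rcases le_or_gt (t - L) (f x) with h1 | h1
  · have := hwin (f x) h1 hcon
    rw [hgf] at this
    exact lt_irrefl x this
  · obtain ⟨x₂, hx₂a, hx₂b⟩ :=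
      ((htop.eventually_ge_atTop (t - L)).and (eventually_ge_atTop (x+1))).exists
    have hP : ∃ k : ℕ, t - L ≤ f (x + 1 + (k : ℤ)) := by
      refine ⟨(x₂ - (x+1)).toNat, ?_⟩
      have : x + 1 + ((x₂ - (x+1)).toNat : ℤ) = x₂ := by omega
      rw [this]; exact hx₂a
    classical
    let k₀ := Nat.find hP
    have hk₀ : t - L ≤ f (x + 1 + (k₀ : ℤ)) := Nat.find_spec hP
    have hprev : f (x + (k₀ : ℤ)) < t - L := by
      rcases Nat.eq_zero_or_pos k₀ with h | h
      · simpa [h] using h1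
      · have hne : ¬ (t - L ≤ f (x + 1 + ((k₀ - 1 : ℕ) : ℤ))) :=
          Nat.find_min hP (by omega)
        have : x + 1 + ((k₀ - 1 : ℕ) : ℤ) = x + (k₀ : ℤ) := by
          have : ((k₀ - 1 : ℕ) : ℤ) = (k₀ : ℤ) - 1 := by omega
          omega
        rw [this] at hne
        omega
    have hs := hstep (x + (k₀ : ℤ))
    have hle : f (x + (k₀ : ℤ) + 1) - f (x + (k₀ : ℤ)) ≤ L := le_of_abs_le hs
    have hx1eq : x + (k₀ : ℤ) + 1 = x + 1 + (k₀ : ℤ) := by ring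
    rw [hx1eq] at hle
    have hub : f (x + 1 + (k₀ : ℤ)) ≤ t + L := by omega
    have := hwin _ hk₀ hub
    rw [hgf] at this
    omega

lemma cross_mirror (f g : ℤ → ℤ) (L : ℤ) (hL : 0 ≤ L)
    (hgf : ∀ y, g (f y) = y)
    (hstep : ∀ x, |f (x+1) - f x| ≤ L)
    (hbot : Filter.Tendsto f Filter.atBot Filter.atBot)
    (t x : ℤ) (hwin : ∀ v, t - L ≤ v → v ≤ t + L → x < g v) :
    f x < t - L := by
  have H := cross_lemma (fun y => -f (-y)) (fun a => -g (-a)) L hL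
    (fun y => by simp [hgf])
    (fun y => by
      have h := hstep (-y - 1)
      have e1 : -y - 1 + 1 = -y := by ring
      rw [e1] at h
      have e2 : -(y + 1) = -y - 1 := by ring
      have e3 : (-f (-(y+1))) - (-f (-y)) = f (-y) - f (-(y+1)) := by ring
      rw [e3, e2]
      exact h)
    (tendsto_neg_atBot_atTop.comp (hbot.comp tendsto_neg_atTop_atBot))
    (-t) (-x)
    (fun v hv1 hv2 => by
      have := hwin (-v) (by omega) (by omega)
      show -g (-v) < -x
      omega)
  simp only [neg_neg] at H
  omega

lemma aux_pos (f : ℤ → ℤ) (C D : ℝ) (hC : 1 ≤ C) (hD : 0 ≤ D)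
    (hbij : Function.Bijective f)
    (hQI : ∀ x y : ℤ, (1/C) * |(x : ℝ) - (y : ℝ)| - D ≤ |(f x : ℝ) - (f y : ℝ)| ∧
      |(f x : ℝ) - (f y : ℝ)| ≤ C * |(x : ℝ) - (y : ℝ)| + D)
    (h0 : f 0 = 0)
    (htop : Filter.Tendsto f Filter.atTop Filter.atTop)
    (hbot : Filter.Tendsto f Filter.atBot Filter.atBot) :
    ∃ M : ℝ, 0 ≤ M ∧ ∀ z : ℤ, 0 ≤ f z → |(f z : ℝ) - (z : ℝ)| ≤ M := by
  classical
  have hC0 : (0:ℝ) < C := lt_of_lt_of_le zero_lt_one hC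
  -- the inverse
  set e := Equiv.ofBijective f hbij with he
  have hfg : ∀ a, f (e.symm a) = a := fun a => e.apply_symm_apply a
  have hgf : ∀ y, e.symm (f y) = y := fun y => e.symm_apply_apply y
  set g : ℤ → ℤ := fun a => e.symm a with hgdef
  -- step bound
  set L : ℤ := ⌈C + D⌉ with hLdef
  have hLreal : C + D ≤ (L : ℝ) := Int.le_ceil _
  have hL0 : 0 ≤ L := by
    have : (0:ℝ) ≤ (L:ℝ) := le_trans (by linarith) hLreal
    exact_mod_cast this
  have hstep : ∀ x, |f (x+1) - f x| ≤ L := by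
    intro x
    have h := (hQI (x+1) x).2
    have hx : |((x+1 : ℤ) : ℝ) - (x : ℝ)| = 1 := by push_cast; simp
    rw [hx, mul_one] at h
    have : (|f (x+1) - f x| : ℝ) ≤ (L : ℝ) := by
      push_cast
      calc |(f (x+1) : ℝ) - (f x : ℝ)| ≤ C + D := h
        _ ≤ (L:ℝ) := hLreal
    exact_mod_cast this
  -- threshold R
  obtain ⟨R₁, hR₁⟩ := (htop.eventually_ge_atTop 1).exists_forall_of_atTop
  obtain ⟨R₂, hR₂⟩ := (hbot.eventually_le_atBot 0).exists_forall_of_atBot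
  set R : ℤ := max 1 (max R₁ (-R₂)) with hRdef
  have hR0 : 0 ≤ R := le_trans zero_le_one (le_max_left _ _)
  have hRp : ∀ x, R ≤ x → 1 ≤ f x := by
    intro x hx
    exact hR₁ x (le_trans (le_trans (le_max_left _ _) (le_max_right _ _)) hx)
  have hRm : ∀ x, x ≤ -R → f x ≤ 0 := by
    intro x hx
    refine hR₂ x ?_
    have : -R₂ ≤ R := le_trans (le_max_right _ _) (le_max_right _ _)
    omega
  -- Lipschitz property of g
  have hgLip : ∀ a b : ℤ, |(g a : ℝ) - (g b : ℝ)| ≤ C * |(a:ℝ) - (b:ℝ)| + C * D := by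
    intro a b
    have h := (hQI (g a) (g b)).1
    rw [hgdef] at h
    simp only [hfg] at h
    -- h : 1/C * |ga - gb| - D ≤ |a - b|
    have h2 : (1/C) * |(g a : ℝ) - (g b : ℝ)| ≤ |(a:ℝ) - (b:ℝ)| + D := by
      rw [hgdef]; linarith
    have h3 : |(g a : ℝ) - (g b : ℝ)| ≤ C * (|(a:ℝ) - (b:ℝ)| + D) := by
      rw [div_mul_eq_mul_div, one_mul] at h2
      rw [div_le_iff₀ hC0] at h2
      linarith [h2]
    linarith [h3]
  -- key bound
  have key : ∀ t : ℤ, 1 ≤ t → |(g t : ℝ) - (t : ℝ)| ≤ (R:ℝ) + C * (2*(L:ℝ)+1) + C * D := by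
    intro t ht
    -- window max
    have hwne : ∀ s : ℤ, ((Finset.Icc (s - L) (s + L)).image g).Nonempty := by
      intro s
      exact (Finset.nonempty_Icc.mpr (by omega)).image g
    set X : ℤ := ((Finset.Icc (t - L) (t + L)).image g).max' (hwne t) with hXdef
    have hXmem := Finset.max'_mem _ (hwne t)
    rw [Finset.mem_image] at hXmem
    obtain ⟨v₁, hv₁mem, hv₁⟩ := hXmem
    rw [Finset.mem_Icc] at hv₁mem
    have hgleX : ∀ v, t - L ≤ v → v ≤ t + L → g v ≤ X :=
      fun v h1 h2 => Finset.le_max' _ _ (Finset.mem_image_of_mem g (Finset.mem_Icc.mpr ⟨h1, h2⟩))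
    -- Part 1 : t ≤ X + R
    have hsub1 : (Finset.Icc 1 t).image g ⊆ Finset.Icc (1 - R) X := by
      intro y hy
      rw [Finset.mem_image] at hy
      obtain ⟨a, hamem, hay⟩ := hy
      rw [Finset.mem_Icc] at hamem
      rw [Finset.mem_Icc]
      constructor
      · by_contra hcon
        push_neg at hcon
        have : f y ≤ 0 := hRm y (by omega)
        rw [← hay, hfg] at this
        omega
      · by_contra hcon
        push_neg at hcon
        have := cross_lemma f g L hL0 (fun z => hgf z) hstep htop t y
          (fun v h1 h2 => lt_of_le_of_lt (hgleX v h1 h2) hcon)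
        rw [← hay, hfg] at this
        omega
    have hcard1 : t ≤ X + R := by
      have h1 : ((Finset.Icc 1 t).image g).card = (Finset.Icc 1 t).card :=
        Finset.card_image_of_injective _ (e.symm.injective)
      have h2 := Finset.card_le_card hsub1
      rw [h1] at h2
      rw [Int.card_Icc, Int.card_Icc] at h2
      omega
    -- Part 2 : x_s ≤ t + R  where s = t + L + 1
    set s : ℤ := t + L + 1 with hsdef
    set Y : ℤ := ((Finset.Icc (s - L) (s + L)).image g).min' (hwne s) with hYdef
    have hYmem := Finset.min'_mem _ (hwne s)
    rw [Finset.mem_image] at hYmem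
    obtain ⟨v₂, hv₂mem, hv₂⟩ := hYmem
    rw [Finset.mem_Icc] at hv₂mem
    have hYle : ∀ v, s - L ≤ v → v ≤ s + L → Y ≤ g v :=
      fun v h1 h2 => Finset.min'_le _ _ (Finset.mem_image_of_mem g (Finset.mem_Icc.mpr ⟨h1, h2⟩))
    have hsub2 : Finset.Icc R (Y - 1) ⊆ (Finset.Icc 1 t).image g := by
      intro y hy
      rw [Finset.mem_Icc] at hy
      have hfy1 : 1 ≤ f y := hRp y hy.1
      have hfyt : f y ≤ t := by
        have := cross_mirror f g L hL0 (fun z => hgf z) hstep hbot s y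
          (fun v h1 h2 => lt_of_lt_of_le (by omega : y < Y) (hYle v h1 h2))
        omega
      rw [Finset.mem_image]
      exact ⟨f y, Finset.mem_Icc.mpr ⟨hfy1, hfyt⟩, hgf y⟩
    have hcard2 : Y ≤ t + R := by
      have h1 : ((Finset.Icc 1 t).image g).card = (Finset.Icc 1 t).card :=
        Finset.card_image_of_injective _ (e.symm.injective)
      have h2 := Finset.card_le_card hsub2
      rw [h1] at h2
      rw [Int.card_Icc, Int.card_Icc] at h2
      omega
    -- combine with Lipschitz
    have hlow : (t:ℝ) - R - (C * (L:ℝ) + C * D) ≤ (g t : ℝ) := by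
      have hlip := hgLip t v₁
      have habs : |(t:ℝ) - (v₁:ℝ)| ≤ (L:ℝ) := by
        have : |t - v₁| ≤ L := by
          rw [abs_le]; omega
        calc |(t:ℝ) - (v₁:ℝ)| = ((|t - v₁| : ℤ) : ℝ) := by push_cast [Int.cast_abs]; ring_nf
          _ ≤ (L:ℝ) := by exact_mod_cast this
      have h1 : (g v₁ : ℝ) - (g t : ℝ) ≤ C * (L:ℝ) + C * D := by
        have := abs_le.mp (hgLip v₁ t)
        have hm : C * |(v₁:ℝ) - (t:ℝ)| ≤ C * (L:ℝ) := by
          apply mul_le_mul_of_nonneg_left _ (le_of_lt hC0)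
          rw [abs_sub_comm]; exact habs
        linarith [this.2]
      have hXt : (t:ℝ) - (R:ℝ) ≤ (g v₁ : ℝ) := by
        have : t - R ≤ g v₁ := by rw [hv₁]; omega
        exact_mod_cast this
      linarith
    have hhigh : (g t : ℝ) ≤ (t:ℝ) + R + (C * (2*(L:ℝ)+1) + C * D) := by
      have habs : |(t:ℝ) - (v₂:ℝ)| ≤ 2*(L:ℝ)+1 := by
        have : |t - v₂| ≤ 2*L+1 := by rw [abs_le]; omega
        calc |(t:ℝ) - (v₂:ℝ)| = ((|t - v₂| : ℤ) : ℝ) := by push_cast [Int.cast_abs]; ring_nf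
          _ ≤ 2*(L:ℝ)+1 := by exact_mod_cast this
      have h1 : (g t : ℝ) - (g v₂ : ℝ) ≤ C * (2*(L:ℝ)+1) + C * D := by
        have := abs_le.mp (hgLip t v₂)
        have hm : C * |(t:ℝ) - (v₂:ℝ)| ≤ C * (2*(L:ℝ)+1) :=
          mul_le_mul_of_nonneg_left habs (le_of_lt hC0)
        linarith [this.2]
      have hYt : (g v₂ : ℝ) ≤ (t:ℝ) + (R:ℝ) := by
        have : g v₂ ≤ t + R := by rw [hv₂]; omega
        exact_mod_cast this
      linarith
    rw [abs_le]
    constructor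
    · have hLL : C * (L:ℝ) ≤ C * (2*(L:ℝ)+1) := by
        apply mul_le_mul_of_nonneg_left _ (le_of_lt hC0)
        have : (0:ℝ) ≤ (L:ℝ) := by exact_mod_cast hL0
        linarith
      linarith
    · linarith
  -- conclude
  refine ⟨(R:ℝ) + C * (2*(L:ℝ)+1) + C * D, ?_, ?_⟩
  · have h1 : (0:ℝ) ≤ (R:ℝ) := by exact_mod_cast hR0
    have h2 : (0:ℝ) ≤ (L:ℝ) := by exact_mod_cast hL0
    have h3 : (0:ℝ) ≤ C * (2*(L:ℝ)+1) := mul_nonneg (le_of_lt hC0) (by linarith)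
    have h4 : (0:ℝ) ≤ C * D := mul_nonneg (le_of_lt hC0) hD
    linarith
  · intro z hz
    rcases eq_or_lt_of_le hz with h | h
    · have hz0 : z = 0 := by
        apply hbij.injective
        rw [← h, h0]
      rw [hz0, h0]
      simp
      have h1 : (0:ℝ) ≤ (R:ℝ) := by exact_mod_cast hR0
      have h2 : (0:ℝ) ≤ (L:ℝ) := by exact_mod_cast hL0
      have h3 : (0:ℝ) ≤ C * (2*(L:ℝ)+1) := mul_nonneg (le_of_lt hC0) (by linarith)
      have h4 : (0:ℝ) ≤ C * D := mul_nonneg (le_of_lt hC0) hD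
      linarith
    · have ht : 1 ≤ f z := h
      have hk := key (f z) ht
      have hz2 : g (f z) = z := hgf z
      rw [hz2, abs_sub_comm] at hk
      exact hk

/-- A bijective (C,D)-quasi-isometry of ℤ fixing 0, +∞ and -∞ is at bounded
distance from the identity. -/
theorem stmt_0 (f : ℤ → ℤ) (C D : ℝ) (hC : 1 ≤ C) (hD : 0 ≤ D)
    (hbij : Function.Bijective f)
    (hQI : ∀ x y : ℤ, (1/C) * |(x : ℝ) - (y : ℝ)| - D ≤ |(f x : ℝ) - (f y : ℝ)| ∧
      |(f x : ℝ) - (f y : ℝ)| ≤ C * |(x : ℝ) - (y : ℝ)| + D)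
    (h0 : f 0 = 0)
    (htop : Filter.Tendsto f Filter.atTop Filter.atTop)
    (hbot : Filter.Tendsto f Filter.atBot Filter.atBot) :
    ∃ M : ℝ, ∀ z : ℤ, |(f z : ℝ) - (z : ℝ)| ≤ M := by
  obtain ⟨M₁, hM₁0, hM₁⟩ := aux_pos f C D hC hD hbij hQI h0 htop hbot
  set f' : ℤ → ℤ := fun z => -f (-z) with hf'def
  have hnegbij : Function.Bijective (fun z : ℤ => -z) :=
    ⟨fun a b h => by simpa using h, fun a => ⟨-a, by simp⟩⟩
  have hbij' : Function.Bijective f' := by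
    have : f' = (fun z : ℤ => -z) ∘ f ∘ (fun z : ℤ => -z) := rfl
    rw [this]
    exact (hnegbij.comp hbij).comp hnegbij
  have hQI' : ∀ x y : ℤ, (1/C) * |(x : ℝ) - (y : ℝ)| - D ≤ |(f' x : ℝ) - (f' y : ℝ)| ∧
      |(f' x : ℝ) - (f' y : ℝ)| ≤ C * |(x : ℝ) - (y : ℝ)| + D := by
    intro x y
    have h := hQI (-x) (-y)
    have e1 : |(f' x : ℝ) - (f' y : ℝ)| = |(f (-x) : ℝ) - (f (-y) : ℝ)| := by
      have : ((f' x : ℤ) : ℝ) - ((f' y : ℤ) : ℝ) = -(((f (-x) : ℤ) : ℝ) - ((f (-y) : ℤ) : ℝ)) := by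
        push_cast [hf'def]
        ring
      rw [this, abs_neg]
    have e2 : |((-x : ℤ) : ℝ) - ((-y : ℤ) : ℝ)| = |(x : ℝ) - (y : ℝ)| := by
      push_cast
      rw [show -(x:ℝ) - (-(y:ℝ)) = -((x:ℝ) - y) from by ring, abs_neg]
    rw [e2] at h
    rw [e1]
    exact h
  have h0' : f' 0 = 0 := by simp [hf'def, h0]
  have htop' : Filter.Tendsto f' Filter.atTop Filter.atTop :=
    tendsto_neg_atBot_atTop.comp (hbot.comp tendsto_neg_atTop_atBot)
  have hbot' : Filter.Tendsto f' Filter.atBot Filter.atBot :=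
    tendsto_neg_atTop_atBot.comp (htop.comp tendsto_neg_atBot_atTop)
  obtain ⟨M₂, hM₂0, hM₂⟩ := aux_pos f' C D hC hD hbij' hQI' h0' htop' hbot'
  refine ⟨max M₁ M₂, fun z => ?_⟩
  rcases le_or_gt 0 (f z) with h | h
  · exact le_trans (hM₁ z h) (le_max_left _ _)
  · have hz' : 0 ≤ f' (-z) := by simp [hf'def]; omega
    have := hM₂ (-z) hz'
    have e1 : |(f' (-z) : ℝ) - ((-z : ℤ) : ℝ)| = |(f z : ℝ) - (z : ℝ)| := by
      have : ((f' (-z) : ℤ) : ℝ) - ((-z : ℤ) : ℝ) = -(((f z : ℤ) : ℝ) - (z : ℝ)) := by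
        push_cast [hf'def]
        ring
      rw [this, abs_neg]
    rw [e1] at this
    exact le_trans this (le_max_right _ _)
end

section
/- Let W₁ and W₂ be groups of the form W_i = (D_∞ × D_∞) and suppose for i = 1,2 there are nonnegative integers m_i, n_i (numbers of neighbor classes attaching along D_∞- and D_∞ × ℤ/2-edges). If there is a quasi-isometry between the associated decorated spaces (L ∪ E₁) and (L ∪ E₂) — two copies of the integer line L with respectively 2m₁+n₁ and 2m₂+n₂ tangling edges at each vertex — that is bijective on tangling edges and fixes 0, ±∞, then this quasi-isometry restricted to L is at bounded distance from multiplication by (2m₁+n₁)/(2m₂+n₂). -/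
/-!
A quasi-isometry `f` of `ℤ` with `f → +∞` at `+∞` is coarsely increasing: if `x ≤ y` and
`f y < f x`, the first point `w ≥ y` where `f` climbs back to `f x` has `f w` close to `f x`,
so `w` is close to `x` by the lower bound, hence close to `y`, and the upper bound keeps `f x`
not far above `f y`. For a coarsely increasing bijection, counting the image of `[x, y)` and the
preimage of the interior of `[f x, f y]` shows that `f y - f x` and `y - x` differ by a bounded
amount, so `f` is at bounded distance from the identity. Rounding down after dividing by `e₂`
costs at most `1`.
-/

open Filter

def CoarselyMonotone (K : ℤ) (f : ℤ → ℤ) : Prop :=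
  ∀ ⦃x y : ℤ⦄, x ≤ y → f x ≤ f y + K

theorem Int.exists_lt_le_map_add_one_of_lt_of_le {f : ℤ → ℤ} {t y z : ℤ} (hyz : y ≤ z)
    (hy : f y < t) (hz : t ≤ f z) : ∃ w, y ≤ w ∧ w < z ∧ f w < t ∧ t ≤ f (w + 1) := by
  induction z, hyz using Int.leInduction with
  | base => omega
  | succ z hyz ih =>
    by_cases hz' : t ≤ f z
    · obtain ⟨w, hyw, hwz, hw⟩ := ih hz'
      exact ⟨w, hyw, by omega, hw⟩
    · exact ⟨z, hyz, by omega, by omega, hz⟩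

theorem exists_coarselyMonotone_of_quasiIsometry {f : ℤ → ℤ} {C D : ℝ} (hC : 0 < C)
    (hQI : ∀ x y : ℤ, (1/C) * |(x : ℝ) - (y : ℝ)| - D ≤ |(f x : ℝ) - (f y : ℝ)| ∧
      |(f x : ℝ) - (f y : ℝ)| ≤ C * |(x : ℝ) - (y : ℝ)| + D)
    (htop : Tendsto f atTop atTop) : ∃ K : ℤ, CoarselyMonotone K f := by
  have hD : 0 ≤ D := by simpa using (hQI 0 0).2
  have hstep (w : ℤ) : (f (w + 1) : ℝ) ≤ f w + (C + D) := by
    have h := (hQI (w + 1) w).2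
    push_cast at h
    rw [add_sub_cancel_left, abs_one, mul_one] at h
    linarith [le_abs_self ((f (w + 1) : ℝ) - f w)]
  suffices h : ∀ x y, x ≤ y → (f x : ℝ) ≤ f y + (C ^ 2 * (C + 2 * D) + C + 2 * D) by
    refine ⟨⌈C ^ 2 * (C + 2 * D) + C + 2 * D⌉, fun x y hxy => ?_⟩
    have : (f x : ℝ) ≤ f y + ⌈C ^ 2 * (C + 2 * D) + C + 2 * D⌉ := by
      linarith [h x y hxy, Int.le_ceil (C ^ 2 * (C + 2 * D) + C + 2 * D)]
    exact_mod_cast this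
  intro x y hxy
  rcases le_or_gt (f x) (f y) with hle | hlt
  · have : (f x : ℝ) ≤ f y := by exact_mod_cast hle
    nlinarith
  obtain ⟨z, hz, hyz⟩ := ((htop.eventually_ge_atTop (f x)).and (eventually_ge_atTop y)).exists
  obtain ⟨w, hyw, -, hw_lt, hw_le⟩ := Int.exists_lt_le_map_add_one_of_lt_of_le hyz hlt hz
  have hfw : |(f w : ℝ) - f x| ≤ C + D := by
    have h₁ : (f w : ℝ) < f x := by exact_mod_cast hw_lt
    have h₂ : (f x : ℝ) ≤ f (w + 1) := by exact_mod_cast hw_le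
    rw [abs_sub_comm, abs_of_pos (sub_pos.2 h₁)]
    linarith [hstep w]
  have hwx : |(w : ℝ) - x| ≤ C * (C + 2 * D) := by
    have h := (hQI w x).1
    rw [one_div_mul_eq_div, sub_le_iff_le_add, div_le_iff₀ hC] at h
    nlinarith
  have hwy : |(w : ℝ) - y| ≤ C * (C + 2 * D) := by
    have h₁ : (x : ℝ) ≤ y := by exact_mod_cast hxy
    have h₂ : (y : ℝ) ≤ w := by exact_mod_cast hyw
    rw [abs_of_nonneg (by linarith)]
    linarith [le_abs_self ((w : ℝ) - x)]
  have h := (hQI w y).2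
  linarith [le_abs_self ((f w : ℝ) - f y), neg_abs_le ((f w : ℝ) - f x),
    mul_le_mul_of_nonneg_left hwy hC.le]

theorem CoarselyMonotone.abs_sub_sub_le {K : ℤ} {f : ℤ → ℤ} (hf : CoarselyMonotone K f)
    (hbij : Function.Bijective f) {x y : ℤ} (hxy : x ≤ y) :
    |f y - f x - (y - x)| ≤ 2 * K + 2 := by
  have hK : 0 ≤ K := by simpa using hf (le_refl x)
  have hinj := Finset.card_le_card_of_injOn f
    (s := Finset.Ico x y) (t := Finset.Icc (f x - K) (f y + K))
    (fun w hw => by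
      simp only [Finset.coe_Ico, Finset.coe_Icc, Set.mem_Ico, Set.mem_Icc] at hw ⊢
      exact ⟨by linarith [hf hw.1], hf hw.2.le⟩)
    hbij.injective.injOn
  have hsurj := Finset.card_le_card_of_surjOn f
    (s := Finset.Icc x y) (t := Finset.Ioo (f x + K) (f y - K))
    (fun t ht => by
      simp only [Finset.coe_Ioo, Finset.coe_Icc, Set.mem_Ioo] at ht ⊢
      obtain ⟨w, rfl⟩ := hbij.surjective t
      refine ⟨w, ⟨?_, ?_⟩, rfl⟩
      · by_contra! h
        linarith [hf h.le]
      · by_contra! h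
        linarith [hf h.le])
  rw [Int.card_Ico, Int.card_Icc] at hinj
  rw [Int.card_Ioo, Int.card_Icc] at hsurj
  have := hf hxy
  rw [abs_le]
  omega

theorem CoarselyMonotone.exists_abs_sub_le {K : ℤ} {f : ℤ → ℤ} (hf : CoarselyMonotone K f)
    (hbij : Function.Bijective f) : ∃ B : ℤ, ∀ x, |f x - x| ≤ B := by
  refine ⟨|f 0| + (2 * K + 2), fun x => ?_⟩
  rcases le_total 0 x with hx | hx <;>
  · have := hf.abs_sub_sub_le hbij hx
    rw [abs_le] at this ⊢
    constructor <;> linarith [le_abs_self (f 0), neg_abs_le (f 0)]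

theorem abs_ediv_sub_div_mul_le (n z : ℤ) (e₁ e₂ : ℕ) :
    |((n.ediv e₂ : ℤ) : ℝ) - (e₁ / e₂ : ℝ) * z| ≤ 1 + |(n : ℝ) - e₁ * z| / e₂ := by
  have hfloor : ⌊(n : ℝ) / e₂⌋ = n.ediv e₂ := by
    rw [Int.floor_div_natCast, Int.floor_intCast]; rfl
  have hround : |((n.ediv e₂ : ℤ) : ℝ) - n / e₂| ≤ 1 := by
    rw [← hfloor, abs_sub_comm, abs_of_nonneg (Int.fract_nonneg _)]
    exact (Int.fract_lt_one _).le
  calc |((n.ediv e₂ : ℤ) : ℝ) - (e₁ / e₂ : ℝ) * z|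
      ≤ |((n.ediv e₂ : ℤ) : ℝ) - n / e₂| + |(n : ℝ) / e₂ - (e₁ / e₂ : ℝ) * z| := abs_sub_le _ _ _
    _ = |((n.ediv e₂ : ℤ) : ℝ) - n / e₂| + |(n : ℝ) - e₁ * z| / e₂ := by
      rw [← mul_div_right_comm, ← sub_div, abs_div, Nat.abs_cast]
    _ ≤ 1 + |(n : ℝ) - e₁ * z| / e₂ := by gcongr

/-- `blockStart e z` is `φ(z, 0)` for the block bijection `φ : ℤ × Fin e → ℤ`,
`φ(z, j) = z e + j` for `z ≥ 0` and `(z + 1) e - j - 1` for `z < 0`. -/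
def blockStart (e : ℕ) (z : ℤ) : ℤ := if 0 ≤ z then z * e else (z + 1) * e - 1

theorem abs_blockStart_sub_le (e : ℕ) (z : ℤ) : |blockStart e z - e * z| ≤ e + 1 := by
  unfold blockStart
  rw [abs_le]
  split_ifs <;> constructor <;> linarith

theorem stmt_14_general (m₁ n₁ m₂ n₂ : ℕ)
    (f : ℤ → ℤ) (C D : ℝ) (hC : 1 ≤ C)
    (hbij : Function.Bijective f)
    (hQI : ∀ x y : ℤ, (1/C) * |(x : ℝ) - (y : ℝ)| - D ≤ |(f x : ℝ) - (f y : ℝ)| ∧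
      |(f x : ℝ) - (f y : ℝ)| ≤ C * |(x : ℝ) - (y : ℝ)| + D)
    (htop : Filter.Tendsto f Filter.atTop Filter.atTop) :
    ∃ M : ℝ, 0 ≤ M ∧ ∀ z : ℤ,
      |(((f (if 0 ≤ z then z * (2*m₁ + n₁ : ℕ) else (z + 1) * (2*m₁ + n₁ : ℕ) - 1)).ediv
          (2*m₂ + n₂ : ℕ) : ℤ) : ℝ)
        - ((2*m₁ + n₁ : ℝ)/(2*m₂ + n₂ : ℝ)) * (z : ℝ)| ≤ M := by
  obtain ⟨K, hK⟩ := exists_coarselyMonotone_of_quasiIsometry (by linarith) hQI htop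
  obtain ⟨B, hB⟩ := hK.exists_abs_sub_le hbij
  set e₁ := 2 * m₁ + n₁
  set e₂ := 2 * m₂ + n₂
  have hB0 : (0 : ℝ) ≤ B := by exact_mod_cast (abs_nonneg _).trans (hB 0)
  refine ⟨1 + (B + e₁ + 1) / e₂, by positivity, fun z => ?_⟩
  have hfa : |f (blockStart e₁ z) - e₁ * z| ≤ B + e₁ + 1 := by
    linarith [abs_sub_le (f (blockStart e₁ z)) (blockStart e₁ z) (e₁ * z), hB (blockStart e₁ z),
      abs_blockStart_sub_le e₁ z]
  have hcoeff : (2 * m₁ + n₁ : ℝ) / (2 * m₂ + n₂ : ℝ) = (e₁ : ℝ) / e₂ := by simp [e₁, e₂]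
  rw [hcoeff]
  calc _ ≤ 1 + |(f (blockStart e₁ z) : ℝ) - e₁ * z| / e₂ := abs_ediv_sub_div_mul_le _ _ _ _
    _ ≤ 1 + (B + e₁ + 1) / e₂ := by gcongr; exact_mod_cast hfa

/-- A quasi-isometry between two copies of the line with 2m₁+n₁ resp. 2m₂+n₂ tangling
edges at each vertex, bijective on tangling edges and fixing 0 and ±∞, scales the line
by (2m₁+n₁)/(2m₂+n₂) up to bounded distance. Via the block bijections
φᵢ : ℤ × Fin(2mᵢ+nᵢ) → ℤ such a map corresponds to a bijective quasi-isometry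
f : ℤ → ℤ fixing 0 and ±∞; the induced map on the line sends z to
⌊f(φ₁(z,0))/(2m₂+n₂)⌋ and is bounded distance from multiplication by
(2m₁+n₁)/(2m₂+n₂). -/
theorem stmt_14 (m₁ n₁ m₂ n₂ : ℕ) (h₁ : 0 < 2*m₁ + n₁) (h₂ : 0 < 2*m₂ + n₂)
    (f : ℤ → ℤ) (C D : ℝ) (hC : 1 ≤ C) (hD : 0 ≤ D)
    (hbij : Function.Bijective f)
    (hQI : ∀ x y : ℤ, (1/C) * |(x : ℝ) - (y : ℝ)| - D ≤ |(f x : ℝ) - (f y : ℝ)| ∧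
      |(f x : ℝ) - (f y : ℝ)| ≤ C * |(x : ℝ) - (y : ℝ)| + D)
    (h0 : f 0 = 0)
    (htop : Filter.Tendsto f Filter.atTop Filter.atTop)
    (hbot : Filter.Tendsto f Filter.atBot Filter.atBot) :
    ∃ M : ℝ, 0 ≤ M ∧ ∀ z : ℤ,
      |(((f (if 0 ≤ z then z * (2*m₁ + n₁ : ℕ) else (z + 1) * (2*m₁ + n₁ : ℕ) - 1)).ediv
          (2*m₂ + n₂ : ℕ) : ℤ) : ℝ)
        - ((2*m₁ + n₁ : ℝ)/(2*m₂ + n₂ : ℝ)) * (z : ℝ)| ≤ M :=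
  stmt_14_general m₁ n₁ m₂ n₂ f C D hC hbij hQI htop
end

section
/- Let T be a simplicial tree of countable valence with a group G acting on it, and let δ₀ : V(T) → O₀ be a G-invariant decoration with finitely many orbits of vertices. Define inductively δ_{i+1}(v) = (δ₀(v), f_{v,i}) where f_{v,i}(o) = |{w ∈ δ_i⁻¹(o) : (w,v) ∈ E(T)}| ∈ ℕ ∪ {∞}. Then each δ_{i+1} is a G-invariant decoration refining δ_i, and the sequence of induced partitions of V(T) stabilizes: there exists s such that for all i ≥ s the partition induced by δ_{i+1} equals that induced by δ_i. -/
/-- The equivalence relation on vertices induced by the i-th step of the neighbor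
refinement of the initial decoration δ₀ : two vertices are related at step i+1 iff
they carry the same initial ornament and, for every class of the step-i relation,
they have the same number of neighbors in that class. -/
def neighborRefine {V : Type*} {O : Type*} (E : V → V → Prop) (δ₀ : V → O) :
    ℕ → V → V → Prop
  | 0, v, w => δ₀ v = δ₀ w
  | (i+1), v, w => δ₀ v = δ₀ w ∧ ∀ u : V,
      Cardinal.mk {x : V | neighborRefine E δ₀ i x u ∧ E x v} =
      Cardinal.mk {x : V | neighborRefine E δ₀ i x u ∧ E x w}

lemma nr_equiv {V : Type*} {O : Type*} (E : V → V → Prop) (δ₀ : V → O) :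
    ∀ i, Equivalence (neighborRefine E δ₀ i)
  | 0 => ⟨fun _ => rfl, Eq.symm, Eq.trans⟩
  | (i+1) =>
    ⟨fun _ => ⟨rfl, fun _ => rfl⟩,
     fun h => ⟨h.1.symm, fun u => (h.2 u).symm⟩,
     fun h h' => ⟨h.1.trans h'.1, fun u => (h.2 u).trans (h'.2 u)⟩⟩

/-- Cardinalities of two sets agree if they agree classwise for some equivalence
relation, for every class meeting their union. -/
lemma mk_eq_mk_of_classes {α : Type*} (s : Setoid α) (A B : Set α)
    (h : ∀ x₀, x₀ ∈ A ∪ B →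
      Cardinal.mk {x | s.r x x₀ ∧ x ∈ A} = Cardinal.mk {x | s.r x x₀ ∧ x ∈ B}) :
    Cardinal.mk A = Cardinal.mk B := by
  have key : ∀ C : Set α, Cardinal.mk C =
      Cardinal.sum (fun q : Quotient s => Cardinal.mk {x | x ∈ C ∧ Quotient.mk s x = q}) := by
    intro C
    rw [← Cardinal.mk_sigma]
    exact Cardinal.mk_congr
      (((Equiv.sigmaFiberEquiv (fun x : C => Quotient.mk s x.1)).symm.trans
        (Equiv.sigmaCongrRight fun q =>
          Equiv.subtypeSubtypeEquivSubtypeInter (· ∈ C) (fun x => Quotient.mk s x = q))).symm).symm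
  rw [key A, key B]
  congr 1
  funext q
  by_cases hne : ∃ y, (y ∈ A ∨ y ∈ B) ∧ Quotient.mk s y = q
  · obtain ⟨y, hy, rfl⟩ := hne
    have hA : {x | x ∈ A ∧ Quotient.mk s x = Quotient.mk s y} = {x | s.r x y ∧ x ∈ A} := by
      ext x
      simp only [Set.mem_setOf_eq, Quotient.eq]
      exact ⟨fun h => ⟨h.2, h.1⟩, fun h => ⟨h.2, h.1⟩⟩
    have hB : {x | x ∈ B ∧ Quotient.mk s x = Quotient.mk s y} = {x | s.r x y ∧ x ∈ B} := by
      ext x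
      simp only [Set.mem_setOf_eq, Quotient.eq]
      exact ⟨fun h => ⟨h.2, h.1⟩, fun h => ⟨h.2, h.1⟩⟩
    rw [hA, hB]
    exact h y (by rcases hy with hy | hy; exacts [Set.mem_union_left _ hy,
      Set.mem_union_right _ hy])
  · push_neg at hne
    have hA : {x | x ∈ A ∧ Quotient.mk s x = q} = ∅ := by
      ext x
      simp only [Set.mem_setOf_eq, Set.mem_empty_iff_false, iff_false, not_and]
      exact fun hx => hne x (Or.inl hx)
    have hB : {x | x ∈ B ∧ Quotient.mk s x = q} = ∅ := by
      ext x
      simp only [Set.mem_setOf_eq, Set.mem_empty_iff_false, iff_false, not_and]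
      exact fun hx => hne x (Or.inr hx)
    rw [hA, hB]

/-- For a tree T of countable valence with a cocompact G-action (finitely many vertex
orbits) and a G-invariant initial decoration δ₀, every step of the neighbor refinement
is again a G-invariant decoration refining the previous one, and the induced sequence
of partitions of V(T) stabilizes. -/
theorem stmt_17 {V : Type*} {G : Type*} [Group G] [MulAction G V]
    (Γ : SimpleGraph V) (htree : Γ.IsTree)
    (hval : ∀ v : V, (Γ.neighborSet v).Countable)
    (hact : ∀ (g : G) (v w : V), Γ.Adj v w → Γ.Adj (g • v) (g • w))
    {O₀ : Type*} (δ₀ : V → O₀) (hδ₀ : ∀ (g : G) (v : V), δ₀ (g • v) = δ₀ v)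
    (horb : Finite (Quotient (MulAction.orbitRel G V))) :
    (∀ (i : ℕ) (g : G) (v w : V),
      neighborRefine Γ.Adj δ₀ i v w → neighborRefine Γ.Adj δ₀ i (g • v) (g • w)) ∧
    (∀ (i : ℕ) (v w : V),
      neighborRefine Γ.Adj δ₀ (i+1) v w → neighborRefine Γ.Adj δ₀ i v w) ∧
    ∃ s : ℕ, ∀ i : ℕ, s ≤ i → ∀ v w : V,
      neighborRefine Γ.Adj δ₀ (i+1) v w ↔ neighborRefine Γ.Adj δ₀ i v w := by
  classical
  clear htree hval
  set R := neighborRefine Γ.Adj δ₀ with hRdef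
  have hEq : ∀ i, Equivalence (R i) := nr_equiv _ _
  -- G-invariance
  have hInv : ∀ (i : ℕ) (g : G) (v w : V), R i v w → R i (g • v) (g • w) := by
    intro i
    induction i with
    | zero =>
      intro g v w h
      show δ₀ _ = δ₀ _
      rw [hδ₀, hδ₀]; exact h
    | succ i ih =>
      have ihIff : ∀ (g : G) (v w : V), R i (g • v) (g • w) ↔ R i v w := by
        intro g v w
        refine ⟨fun h => ?_, ih g v w⟩
        have := ih g⁻¹ _ _ h
        simpa using this
      have key : ∀ (g : G) (u z : V),
          Cardinal.mk {x | R i x u ∧ Γ.Adj x (g • z)} =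
          Cardinal.mk {x | R i x (g⁻¹ • u) ∧ Γ.Adj x z} := by
        intro g u z
        apply Cardinal.mk_congr
        refine Equiv.subtypeEquiv (MulAction.toPerm (g⁻¹ : G)) fun x => ?_
        simp only [MulAction.toPerm_apply, Set.mem_setOf_eq]
        constructor
        · rintro ⟨h1, h2⟩
          refine ⟨ih g⁻¹ _ _ h1, ?_⟩
          have := hact g⁻¹ _ _ h2
          simpa using this
        · rintro ⟨h1, h2⟩
          constructor
          · have := ih g _ _ h1
            simpa using this
          · have := hact g _ _ h2
            simpa using this
      intro g v w h
      refine ⟨by rw [hδ₀, hδ₀]; exact h.1, fun u => ?_⟩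
      calc Cardinal.mk {x | R i x u ∧ Γ.Adj x (g • v)}
          = Cardinal.mk {x | R i x (g⁻¹ • u) ∧ Γ.Adj x v} := key g u v
        _ = Cardinal.mk {x | R i x (g⁻¹ • u) ∧ Γ.Adj x w} := h.2 (g⁻¹ • u)
        _ = Cardinal.mk {x | R i x u ∧ Γ.Adj x (g • w)} := (key g u w).symm
  have hKey : ∀ (i : ℕ) (g : G) (u z : V),
      Cardinal.mk {x | R i x u ∧ Γ.Adj x (g • z)} =
      Cardinal.mk {x | R i x (g⁻¹ • u) ∧ Γ.Adj x z} := by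
    intro i g u z
    apply Cardinal.mk_congr
    refine Equiv.subtypeEquiv (MulAction.toPerm (g⁻¹ : G)) fun x => ?_
    simp only [MulAction.toPerm_apply, Set.mem_setOf_eq]
    constructor
    · rintro ⟨h1, h2⟩
      refine ⟨hInv i g⁻¹ _ _ h1, ?_⟩
      have := hact g⁻¹ _ _ h2
      simpa using this
    · rintro ⟨h1, h2⟩
      constructor
      · have := hInv i g _ _ h1
        simpa using this
      · have := hact g _ _ h2
        simpa using this
  -- each class is a union of orbits
  have hOrb : ∀ (i : ℕ) (g : G) (v : V), R i v (g • v) := by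
    intro i
    induction i with
    | zero => intro g v; exact (hδ₀ g v).symm
    | succ i ih =>
      intro g v
      refine ⟨(hδ₀ g v).symm, fun u => ?_⟩
      have hu : R i u (g⁻¹ • u) := ih g⁻¹ u
      have hset : {x | R i x u ∧ Γ.Adj x v} = {x | R i x (g⁻¹ • u) ∧ Γ.Adj x v} := by
        ext x
        exact and_congr_left' ⟨fun h => (hEq i).trans h hu,
          fun h => (hEq i).trans h ((hEq i).symm hu)⟩
      rw [hKey i g u v, hset]
  -- refinement
  have hRef : ∀ (i : ℕ) (v w : V), R (i+1) v w → R i v w := by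
    intro i
    induction i with
    | zero => intro v w h; exact h.1
    | succ i ih =>
      intro v w h
      refine ⟨h.1, fun u => ?_⟩
      refine mk_eq_mk_of_classes ⟨R (i+1), hEq (i+1)⟩
        {x | R i x u ∧ Γ.Adj x v} {x | R i x u ∧ Γ.Adj x w} ?_
      intro x₀ hx₀
      have hx₀u : R i x₀ u := by rcases hx₀ with h' | h' <;> exact h'.1
      have hA : {x | R (i+1) x x₀ ∧ x ∈ {x | R i x u ∧ Γ.Adj x v}} =
          {x | R (i+1) x x₀ ∧ Γ.Adj x v} := by
        ext x
        simp only [Set.mem_setOf_eq]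
        exact ⟨fun h' => ⟨h'.1, h'.2.2⟩,
          fun h' => ⟨h'.1, (hEq i).trans (ih _ _ h'.1) hx₀u, h'.2⟩⟩
      have hB : {x | R (i+1) x x₀ ∧ x ∈ {x | R i x u ∧ Γ.Adj x w}} =
          {x | R (i+1) x x₀ ∧ Γ.Adj x w} := by
        ext x
        simp only [Set.mem_setOf_eq]
        exact ⟨fun h' => ⟨h'.1, h'.2.2⟩,
          fun h' => ⟨h'.1, (hEq i).trans (ih _ _ h'.1) hx₀u, h'.2⟩⟩
      show Cardinal.mk {x | R (i+1) x x₀ ∧ x ∈ {x | R i x u ∧ Γ.Adj x v}} =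
        Cardinal.mk {x | R (i+1) x x₀ ∧ x ∈ {x | R i x u ∧ Γ.Adj x w}}
      rw [hA, hB]
      exact h.2 x₀
  -- one stabilization step propagates
  have hStep : ∀ i : ℕ, (∀ v w, R (i+1) v w ↔ R i v w) →
      ∀ v w, R (i+1+1) v w ↔ R (i+1) v w := by
    intro i hi v w
    have hset : ∀ u z : V, {x | R (i+1) x u ∧ Γ.Adj x z} = {x | R i x u ∧ Γ.Adj x z} := by
      intro u z
      ext x
      exact and_congr_left' (hi x u)
    constructor
    · rintro ⟨h1, h2⟩
      exact ⟨h1, fun u => by rw [← hset u v, ← hset u w]; exact h2 u⟩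
    · rintro ⟨h1, h2⟩
      exact ⟨h1, fun u => by rw [hset u v, hset u w]; exact h2 u⟩
  -- finite quotients
  let s : ℕ → Setoid V := fun i => ⟨R i, hEq i⟩
  have hOrbR : ∀ (i : ℕ) (v w : V), (MulAction.orbitRel G V) v w → R i v w := by
    intro i v w h
    obtain ⟨g, hg⟩ := h
    exact (hEq i).symm (hg ▸ hOrb i g w)
  let φ : ∀ i : ℕ, Quotient (MulAction.orbitRel G V) → Quotient (s i) := fun i =>
    Quotient.map' id (fun v w h => hOrbR i v w h)
  have hφ : ∀ i, Function.Surjective (φ i) := by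
    intro i q
    obtain ⟨v, rfl⟩ := Quotient.exists_rep q
    exact ⟨Quotient.mk'' v, rfl⟩
  have hQfin : ∀ i, Finite (Quotient (s i)) := fun i =>
    Finite.of_surjective (φ i) (hφ i)
  let p : ∀ i : ℕ, Quotient (s (i+1)) → Quotient (s i) := fun i =>
    Quotient.map' id (fun v w h => hRef i v w h)
  have hp : ∀ i, Function.Surjective (p i) := by
    intro i q
    obtain ⟨v, rfl⟩ := Quotient.exists_rep q
    exact ⟨Quotient.mk'' v, rfl⟩
  let n : ℕ → ℕ := fun i => Nat.card (Quotient (s i))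
  have hmono : ∀ i, n i ≤ n (i+1) := by
    intro i
    have := hQfin (i+1)
    exact Nat.card_le_card_of_surjective (p i) (hp i)
  have hbound : ∀ i, n i ≤ Nat.card (Quotient (MulAction.orbitRel G V)) := by
    intro i
    exact Nat.card_le_card_of_surjective (φ i) (hφ i)
  have hex : ∃ s₀ : ℕ, n (s₀+1) = n s₀ := by
    by_contra hc
    push_neg at hc
    have hsm : StrictMono n :=
      strictMono_nat_of_lt_succ fun i => lt_of_le_of_ne (hmono i) (Ne.symm (hc i))
    have h1 : Nat.card (Quotient (MulAction.orbitRel G V)) + 1 ≤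
        n (Nat.card (Quotient (MulAction.orbitRel G V)) + 1) := hsm.le_apply
    have h2 := hbound (Nat.card (Quotient (MulAction.orbitRel G V)) + 1)
    omega
  obtain ⟨s₀, hs₀⟩ := hex
  have hbij : Function.Bijective (p s₀) := by
    have := hQfin s₀
    have := hQfin (s₀+1)
    rw [Nat.bijective_iff_surjective_and_card]
    exact ⟨hp s₀, hs₀⟩
  have hsIff : ∀ v w : V, R (s₀+1) v w ↔ R s₀ v w := by
    intro v w
    refine ⟨hRef s₀ v w, fun h => ?_⟩
    have heq : p s₀ (Quotient.mk'' v) = p s₀ (Quotient.mk'' w) := by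
      simp only [p, Quotient.map'_mk'', id_eq]
      exact Quotient.sound' h
    exact Quotient.exact' (hbij.1 heq)
  refine ⟨hInv, hRef, s₀, ?_⟩
  intro i hi
  induction i, hi using Nat.le_induction with
  | base => exact hsIff
  | succ i hi ih => exact hStep i ih
end
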